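/- arXiv:1806.07191 — 3 statements merged into one kernel-verified Lean document; each statement's English description precedes it below -/
import Mathlib

section
/- For every integer n > 1, the number of edges of the independent graph I_G(Z_n) equals (n² − Σ_{d ∣ n} φ(d)²)/2, where the sum ranges over the positive divisors d of n and φ is the Euler totient function. -/
open SimpleGraph

/-- The independent graph of `ZMod n`: two distinct vertices are adjacent iff
their additive orders differ. -/
def indepGraph (n : ℕ) : SimpleGraph (ZMod n) where
  Adj a b := addOrderOf a ≠ addOrderOf b
  symm := ⟨fun _ _ h => h.symm⟩
  loopless := ⟨fun _ h => h rfl⟩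

noncomputable instance (n : ℕ) : DecidableRel (indepGraph n).Adj :=
  fun a b => inferInstanceAs (Decidable (addOrderOf a ≠ addOrderOf b))

/-!
The independent graph is the complete multipartite graph whose parts are the sets of elements
of a given order. Counting ordered pairs, `2 |E| = n² - #{(a, b) | ord a = ord b}`, and the
part of order `d ∣ n` has `φ(d)` elements, so it contributes `φ(d)²` such pairs.
-/

open Finset

theorem Finset.card_filter_comp_eq_eq_sum_sq {V β : Type*} [Fintype V] [DecidableEq β]
    (f : V → β) {t : Finset β} (ht : ∀ v, f v ∈ t) :
    #{p : V × V | f p.1 = f p.2} = ∑ b ∈ t, #{v | f v = b} ^ 2 := by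
  rw [card_eq_sum_card_fiberwise (f := fun p => f p.1) (t := t) fun p _ => ht p.1]
  refine sum_congr rfl fun b _ => ?_
  rw [sq, ← card_product, filter_filter]
  congr 1
  ext ⟨x, y⟩
  simp only [mem_filter, mem_univ, true_and, mem_product]
  constructor
  · rintro ⟨hxy, rfl⟩; exact ⟨rfl, hxy.symm⟩
  · rintro ⟨rfl, hy⟩; exact ⟨hy.symm, rfl⟩

theorem SimpleGraph.two_mul_card_edgeFinset_add_sum_sq_of_adj_iff {V β : Type*} [Fintype V]
    [DecidableEq β] (G : SimpleGraph V) [DecidableRel G.Adj] (f : V → β)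
    (hG : ∀ a b, G.Adj a b ↔ f a ≠ f b) {t : Finset β} (ht : ∀ v, f v ∈ t) :
    2 * #G.edgeFinset + ∑ b ∈ t, #{v | f v = b} ^ 2 = Fintype.card V ^ 2 := by
  have hsplit := card_filter_add_card_filter_not (s := univ) fun p : V × V => f p.1 = f p.2
  rw [card_univ, Fintype.card_prod, ← sq] at hsplit
  rw [two_mul_card_edgeFinset, ← card_filter_comp_eq_eq_sum_sq f ht, ← hsplit]
  simp only [hG, ne_eq]
  omega

theorem ZMod.card_addOrderOf_eq_totient {n d : ℕ} [NeZero n] (hd : d ∣ n) :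
    #{a : ZMod n | addOrderOf a = d} = d.totient :=
  IsAddCyclic.card_addOrderOf_eq_totient (by rwa [ZMod.card])

theorem ZMod.addOrderOf_mem_divisors {n : ℕ} [NeZero n] (a : ZMod n) :
    addOrderOf a ∈ n.divisors :=
  Nat.mem_divisors.2 ⟨by simpa only [ZMod.card] using addOrderOf_dvd_card (x := a), NeZero.ne n⟩

theorem stmt_6_general (n : ℕ) [NeZero n] :
    (indepGraph n).edgeFinset.card
      = (n ^ 2 - ∑ d ∈ n.divisors, Nat.totient d ^ 2) / 2 := by
  have h := (indepGraph n).two_mul_card_edgeFinset_add_sum_sq_of_adj_iff addOrderOf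
    (fun _ _ => Iff.rfl) ZMod.addOrderOf_mem_divisors
  rw [ZMod.card, sum_congr rfl fun d hd =>
    congrArg (· ^ 2) (ZMod.card_addOrderOf_eq_totient (Nat.dvd_of_mem_divisors hd))] at h
  omega

/-- The number of edges of the independent graph. -/
theorem stmt_6 (n : ℕ) [NeZero n] (hn : 1 < n) :
    (indepGraph n).edgeFinset.card
      = (n ^ 2 - ∑ d ∈ n.divisors, Nat.totient d ^ 2) / 2 :=
  stmt_6_general n
end

section
/- For every composite integer n (that is, n > 1 and n not prime), the girth of the independent graph I_G(Z_n) equals 3; that is, I_G(Z_n) contains a triangle and 3 is the length of its shortest cycle. -/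
open SimpleGraph

/-!
A proper divisor `1 < d < n` gives three elements `0`, `1`, `n / d` of `ZMod n`
of the pairwise distinct additive orders `1`, `n`, `d`, hence a triangle, and a simple graph
with a triangle has girth `3`.
-/

theorem SimpleGraph.egirth_eq_three_of_adj {α : Type*} {G : SimpleGraph α} {a b c : α}
    (hab : G.Adj a b) (hac : G.Adj a c) (hbc : G.Adj b c) : G.egirth = 3 := by
  classical
  obtain ⟨u, w, hw, hlen⟩ := is3Clique_iff_exists_cycle_length_three.mp
    ⟨_, is3Clique_triple_iff.mpr ⟨hab, hac, hbc⟩⟩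
  refine le_antisymm ?_ three_le_egirth
  simpa [hlen] using egirth_le_length hw

theorem ZMod.addOrderOf_natCast_div {n d : ℕ} (hn : n ≠ 0) (hd : d ∣ n) :
    addOrderOf ((n / d : ℕ) : ZMod n) = d := by
  rw [ZMod.addOrderOf_coe _ hn, Nat.gcd_eq_right (Nat.div_dvd_of_dvd hd), Nat.div_div_self hd hn]

theorem indepGraph_adj {n : ℕ} {a b : ZMod n} :
    (indepGraph n).Adj a b ↔ addOrderOf a ≠ addOrderOf b :=
  Iff.rfl

/-- For composite n the girth of the independent graph is 3. -/
theorem stmt_11 (n : ℕ) (hn : 1 < n) (hn' : ¬ n.Prime) :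
    (indepGraph n).egirth = 3 := by
  obtain ⟨d, hdn, hd1, hd⟩ := Nat.exists_dvd_of_not_prime2 hn hn'
  have hn0 : n ≠ 0 := by omega
  have h0 : addOrderOf (0 : ZMod n) = 1 := addOrderOf_zero
  have h1 : addOrderOf (1 : ZMod n) = n := ZMod.addOrderOf_one n
  have hc : addOrderOf ((n / d : ℕ) : ZMod n) = d := ZMod.addOrderOf_natCast_div hn0 hdn
  refine egirth_eq_three_of_adj (a := 0) (b := 1) (c := ((n / d : ℕ) : ZMod n)) ?_ ?_ ?_ <;>
    rw [indepGraph_adj] <;> omega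
end

section
/- For every even integer n ≥ 4, the independent graph I_G(Z_n) is Hamiltonian; in fact 0 − 1 − 2 − ⋯ − (n−1) − 0 is a Hamiltonian cycle, since consecutive residues modulo n have distinct additive orders when n is even. -/
/-!
Write `n = 2m`. For `a ∈ ℤ/n`, `m • a = 0` exactly when the representative `a.val` is even, and
since `n` is even, `a.val` and `(a + 1).val` have opposite parities. So exactly one of `a`, `a + 1`
has additive order dividing `m`, and consecutive residues are adjacent in `I_G(ℤ/n)`. Hence the
`n`-cycle `0 − 1 − ⋯ − (n − 1) − 0`, i.e. the circulant graph with jump set `{1}`, is a spanning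
subgraph of `I_G(ℤ/n)`.
-/

open SimpleGraph

theorem SimpleGraph.cycleGraph_isHamiltonian (n : ℕ) : (cycleGraph (n + 3)).IsHamiltonian :=
  fun _ => ⟨0, cycleGraph.cycle n, Walk.isHamiltonianCycle_iff_isCycle_and_length_eq.mpr
    ⟨cycleGraph.isCycle_cycle, by simp⟩⟩

namespace ZMod

variable {n : ℕ} [NeZero n]

theorem half_nsmul_eq_zero_iff_even_val (hn : Even n) (a : ZMod n) :
    (n / 2) • a = 0 ↔ Even a.val := by
  obtain ⟨m, hm⟩ := hn
  have hm0 : 0 < m := by have := NeZero.pos n; omega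
  have hcast : (n / 2) • a = ((m * a.val : ℕ) : ZMod n) := by
    rw [show n / 2 = m by omega, Nat.cast_mul, natCast_zmod_val, nsmul_eq_mul]
  rw [hcast, natCast_eq_zero_iff, even_iff_two_dvd]
  generalize a.val = k
  rw [hm, ← mul_two, Nat.mul_dvd_mul_iff_left hm0]

theorem even_val_add_one_iff (hn : Even n) (a : ZMod n) : Even (a + 1).val ↔ ¬Even a.val := by
  have h2 : 2 ≤ n := by obtain ⟨m, hm⟩ := hn; have := NeZero.pos n; omega
  rw [val_add, val_one_eq_one_mod, Nat.mod_eq_of_lt h2, Nat.even_iff,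
    Nat.mod_mod_of_dvd _ (even_iff_two_dvd.mp hn), ← Nat.even_iff, Nat.even_add_one]

theorem addOrderOf_add_one_ne (hn : Even n) (a : ZMod n) : addOrderOf (a + 1) ≠ addOrderOf a := by
  intro h
  have := half_nsmul_eq_zero_iff_even_val hn (a + 1)
  rw [← addOrderOf_dvd_iff_nsmul_eq_zero, h, addOrderOf_dvd_iff_nsmul_eq_zero,
    half_nsmul_eq_zero_iff_even_val hn, even_val_add_one_iff hn] at this
  exact iff_not_self this

end ZMod

theorem circulantGraph_one_le_indepGraph {n : ℕ} [NeZero n] (hn : Even n) :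
    circulantGraph {1} ≤ indepGraph n := by
  rintro a b ⟨-, h | h⟩ <;> rw [Set.mem_singleton_iff, sub_eq_iff_eq_add'] at h <;> subst h
  · exact ZMod.addOrderOf_add_one_ne hn b
  · exact (ZMod.addOrderOf_add_one_ne hn a).symm

theorem circulantGraph_one_isHamiltonian {n : ℕ} [NeZero n] (hn : 3 ≤ n) :
    (circulantGraph ({1} : Set (ZMod n))).IsHamiltonian := by
  obtain ⟨k, rfl⟩ := Nat.exists_eq_add_of_le' hn
  have := cycleGraph_isHamiltonian k
  rw [cycleGraph_eq_circulantGraph] at this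
  exact this

/-- For even n ≥ 4, the independent graph is Hamiltonian. -/
theorem stmt_14 (n : ℕ) [NeZero n] (hn : 4 ≤ n) (he : Even n) :
    (indepGraph n).IsHamiltonian :=
  (circulantGraph_one_isHamiltonian (by omega)).mono (circulantGraph_one_le_indepGraph he)
end
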